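/- arXiv:2605.05341 — 2 statements merged into one kernel-verified Lean document; each statement's English description precedes it below -/
import Mathlib

section
/- Let h†(x) denote the unique minimizer over the nonnegative orthant of h ↦ (1/2)‖x − D h‖² + λ₁ Σᵢ wᵢ |hᵢ| + λ₂ ‖h‖², with fixed weights wᵢ ≥ 0 and λ₂ > 0. Then the map x ↦ h†(x) is Lipschitz continuous with constant at most 1/(2√(2λ₂)): ‖h†(x₁) − h†(x₂)‖ ≤ ‖x₁ − x₂‖ / (2√(2λ₂)). -/
/-!
Write `F x` for the objective at data `x` and `Q v = ½‖T v‖² + λ‖v‖²` for its quadratic part.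
Since `F x` is `φ` plus a quadratic with second-order part `Q`, a minimizer `h` over a convex set
satisfies the quadratic growth bound `F x h + Q (y - h) ≤ F x y`. Adding these bounds for the
minimizers `h₁, h₂` at `x₁, x₂`, all terms cancel except
`2λ‖h₁ - h₂‖² + ‖T (h₁ - h₂)‖² ≤ ⟪x₁ - x₂, T (h₁ - h₂)⟫ ≤ ‖x₁ - x₂‖ ‖T (h₁ - h₂)‖`,
and `s v - v² ≤ s² / 4` turns this into `8λ‖h₁ - h₂‖² ≤ ‖x₁ - x₂‖²`.
-/

open Matrix RealInnerProductSpace Filter Topology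

section QuadraticGrowth

variable {E : Type*} [AddCommGroup E] [Module ℝ E] {C : Set E} {F Q : E → ℝ} {h y : E}

theorem IsMinOn.add_le_of_convex_combination_le (hC : Convex ℝ C)
    (hF : ∀ a ∈ C, ∀ b ∈ C, ∀ ⦃s t : ℝ⦄, 0 ≤ s → 0 ≤ t → s + t = 1 →
      F (s • a + t • b) ≤ s * F a + t * F b - s * t * Q (a - b))
    (hmin : IsMinOn F C h) (hh : h ∈ C) (hy : y ∈ C) : F h + Q (y - h) ≤ F y := by
  have hseg : ∀ t ∈ Set.Ioo (0 : ℝ) 1, F h + t * Q (y - h) ≤ F y := by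
    rintro t ⟨ht₀, ht₁⟩
    have hs : 0 < 1 - t := sub_pos.2 ht₁
    have hle : F h ≤ F ((1 - t) • y + t • h) := hmin (hC hy hh hs.le ht₀.le (sub_add_cancel 1 t))
    have hcomb := hF y hy h hh hs.le ht₀.le (sub_add_cancel 1 t)
    refine le_of_mul_le_mul_left ?_ hs
    linarith
  have hlim : Tendsto (fun t : ℝ => F h + t * Q (y - h)) (𝓝[<] 1) (𝓝 (F h + 1 * Q (y - h))) :=
    ((continuous_const.add (continuous_id.mul continuous_const)).tendsto 1).mono_left
      nhdsWithin_le_nhds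
  simpa using le_of_tendsto hlim (eventually_of_mem (Ioo_mem_nhdsLT one_pos) hseg)

end QuadraticGrowth

theorem norm_smul_add_smul_sq {E : Type*} [NormedAddCommGroup E] [InnerProductSpace ℝ E]
    (a b : E) {s t : ℝ} (hst : s + t = 1) :
    ‖s • a + t • b‖ ^ 2 = s * ‖a‖ ^ 2 + t * ‖b‖ ^ 2 - s * t * ‖a - b‖ ^ 2 := by
  rw [norm_add_sq_real, norm_sub_sq_real, norm_smul, norm_smul, real_inner_smul_left,
    real_inner_smul_right, mul_pow, mul_pow, Real.norm_eq_abs, Real.norm_eq_abs, sq_abs, sq_abs]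
  obtain rfl := eq_sub_of_add_eq hst
  ring

theorem le_div_two_mul_sqrt_of_mul_sq_add_sq_le {lam u v s : ℝ} (hlam : 0 < lam) (hu : 0 ≤ u)
    (hs : 0 ≤ s) (h : 2 * lam * u ^ 2 + v ^ 2 ≤ s * v) :
    u ≤ s / (2 * Real.sqrt (2 * lam)) := by
  have hr : 0 < Real.sqrt (2 * lam) := Real.sqrt_pos.2 (by linarith)
  have hr2 : Real.sqrt (2 * lam) ^ 2 = 2 * lam := Real.sq_sqrt (by linarith)
  rw [le_div_iff₀ (by positivity)]
  refine (pow_le_pow_iff_left₀ (by positivity) hs two_ne_zero).1 ?_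
  nlinarith [sq_nonneg (s - 2 * v)]

section ElasticNet

variable {E F : Type*} [NormedAddCommGroup E] [InnerProductSpace ℝ E] [NormedAddCommGroup F]
  [InnerProductSpace ℝ F] (T : E →ₗ[ℝ] F) (φ : E → ℝ) (lam : ℝ)

noncomputable def elasticNetObjective (x : F) (h : E) : ℝ :=
  1 / 2 * ‖x - T h‖ ^ 2 + φ h + lam * ‖h‖ ^ 2

variable {T φ lam} {C : Set E}

theorem elasticNetObjective_smul_add_smul_le (hφ : ConvexOn ℝ C φ) (x : F) {a b : E}
    (ha : a ∈ C) (hb : b ∈ C) {s t : ℝ} (hs : 0 ≤ s) (ht : 0 ≤ t) (hst : s + t = 1) :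
    elasticNetObjective T φ lam x (s • a + t • b) ≤
      s * elasticNetObjective T φ lam x a + t * elasticNetObjective T φ lam x b -
        s * t * (1 / 2 * ‖T (a - b)‖ ^ 2 + lam * ‖a - b‖ ^ 2) := by
  have hres : x - T (s • a + t • b) = s • (x - T a) + t • (x - T b) := by
    rw [map_add, map_smul, map_smul]
    nth_rewrite 1 [← one_smul ℝ x]
    rw [← hst]
    module
  have hdiff : (x - T a) - (x - T b) = -T (a - b) := by rw [map_sub]; abel
  have hφab := hφ.2 ha hb hs ht hst
  simp only [smul_eq_mul] at hφab
  unfold elasticNetObjective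
  rw [hres, norm_smul_add_smul_sq _ _ hst, norm_smul_add_smul_sq _ _ hst, hdiff, norm_neg]
  linarith

theorem norm_sub_le_of_isMinOn_elasticNetObjective (hlam : 0 < lam) (hφ : ConvexOn ℝ C φ)
    {x₁ x₂ : F} {h₁ h₂ : E} (hh₁ : h₁ ∈ C) (hh₂ : h₂ ∈ C)
    (hmin₁ : IsMinOn (elasticNetObjective T φ lam x₁) C h₁)
    (hmin₂ : IsMinOn (elasticNetObjective T φ lam x₂) C h₂) :
    ‖h₁ - h₂‖ ≤ ‖x₁ - x₂‖ / (2 * Real.sqrt (2 * lam)) := by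
  have hgrowth (x : F) {h y : E} (hmin : IsMinOn (elasticNetObjective T φ lam x) C h)
      (hh : h ∈ C) (hy : y ∈ C) :
      elasticNetObjective T φ lam x h + (1 / 2 * ‖T (y - h)‖ ^ 2 + lam * ‖y - h‖ ^ 2) ≤
        elasticNetObjective T φ lam x y :=
    hmin.add_le_of_convex_combination_le (Q := fun v => 1 / 2 * ‖T v‖ ^ 2 + lam * ‖v‖ ^ 2)
      hφ.1 (fun _ ha _ hb _ _ hs ht hst =>
        elasticNetObjective_smul_add_smul_le hφ x ha hb hs ht hst) hh hy
  have g₁ := hgrowth x₁ hmin₁ hh₁ hh₂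
  have g₂ := hgrowth x₂ hmin₂ hh₂ hh₁
  have hpolar : ‖x₁ - T h₂‖ ^ 2 - ‖x₁ - T h₁‖ ^ 2 + ‖x₂ - T h₁‖ ^ 2 - ‖x₂ - T h₂‖ ^ 2 =
      2 * ⟪x₁ - x₂, T (h₁ - h₂)⟫ := by
    simp only [norm_sub_sq_real, map_sub, inner_sub_left, inner_sub_right]
    ring
  have hkey : 2 * lam * ‖h₁ - h₂‖ ^ 2 + ‖T (h₁ - h₂)‖ ^ 2 ≤ ‖x₁ - x₂‖ * ‖T (h₁ - h₂)‖ :=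
    calc _ ≤ ⟪x₁ - x₂, T (h₁ - h₂)⟫ := by
          unfold elasticNetObjective at g₁ g₂
          rw [norm_sub_rev h₂, map_sub T h₂, norm_sub_rev (T h₂), ← map_sub] at g₁
          linarith
      _ ≤ _ := real_inner_le_norm _ _
  exact le_div_two_mul_sqrt_of_mul_sq_add_sq_le hlam (norm_nonneg _) (norm_nonneg _) hkey

end ElasticNet

theorem convex_setOf_forall_nonneg {ι : Type*} :
    Convex ℝ {h : EuclideanSpace ℝ ι | ∀ i, 0 ≤ h i} := fun a ha b hb s t hs ht _ i => by
  simpa only [PiLp.add_apply, PiLp.smul_apply, smul_eq_mul] using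
    add_nonneg (mul_nonneg hs (ha i)) (mul_nonneg ht (hb i))

theorem convexOn_univ_sum_mul_abs {ι : Type*} [Fintype ι] {w : ι → ℝ} (hw : ∀ i, 0 ≤ w i) :
    ConvexOn ℝ Set.univ fun h : EuclideanSpace ℝ ι => ∑ i, w i * |h i| := by
  refine ⟨convex_univ, fun a _ b _ s t hs ht _ => ?_⟩
  simp only [smul_eq_mul, Finset.mul_sum, ← Finset.sum_add_distrib]
  refine Finset.sum_le_sum fun i _ => ?_
  have habs : |s * a i + t * b i| ≤ s * |a i| + t * |b i| := by
    simpa only [abs_mul, abs_of_nonneg hs, abs_of_nonneg ht] using abs_add_le (s * a i) (t * b i)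
  calc w i * |(s • a + t • b) i| ≤ w i * (s * |a i| + t * |b i|) :=
        mul_le_mul_of_nonneg_left habs (hw i)
    _ = s * (w i * |a i|) + t * (w i * |b i|) := by ring

/-- Lipschitz stability of the elastic-net solution map: the minimizer `h†(x)` of
`(1/2)‖x − Dh‖² + λ₁ Σᵢ wᵢ|hᵢ| + λ₂‖h‖²` over the nonnegative orthant is
Lipschitz in `x` with constant `1/(2√(2λ₂))`. -/
theorem stmt_2 {d n : ℕ} (D : Matrix (Fin d) (Fin n) ℝ)
    (lam1 lam2 : ℝ) (hlam1 : 0 ≤ lam1) (hlam2 : 0 < lam2)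
    (w : Fin n → ℝ) (hw : ∀ i, 0 ≤ w i)
    (hdag : EuclideanSpace ℝ (Fin d) → EuclideanSpace ℝ (Fin n))
    (hmem : ∀ x, ∀ i, 0 ≤ hdag x i)
    (hmin : ∀ x : EuclideanSpace ℝ (Fin d),
      IsMinOn (fun h : EuclideanSpace ℝ (Fin n) =>
          (1 / 2) * ‖x - (show EuclideanSpace ℝ (Fin d) from WithLp.toLp 2 (D.mulVec h))‖ ^ 2
            + lam1 * ∑ i, w i * |h i| + lam2 * ‖h‖ ^ 2)
        {h : EuclideanSpace ℝ (Fin n) | ∀ i, 0 ≤ h i} (hdag x)) :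
    ∀ x₁ x₂ : EuclideanSpace ℝ (Fin d),
      ‖hdag x₁ - hdag x₂‖ ≤ ‖x₁ - x₂‖ / (2 * Real.sqrt (2 * lam2)) := by
  intro x₁ x₂
  have hφ : ConvexOn ℝ {h : EuclideanSpace ℝ (Fin n) | ∀ i, 0 ≤ h i}
      fun h => lam1 * ∑ i, w i * |h i| :=
    ((convexOn_univ_sum_mul_abs hw).smul hlam1).subset (Set.subset_univ _)
      convex_setOf_forall_nonneg
  -- `hmin x` is about `elasticNetObjective`, as `toEuclideanLin D h` unfolds to `toLp 2 (D *ᵥ h)`.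
  exact norm_sub_le_of_isMinOn_elasticNetObjective (T := toEuclideanLin D) hlam2 hφ
    (hmem x₁) (hmem x₂) (hmin x₁) (hmin x₂)
end

section
/- Let (F_t) be a sequence of convex functions on R^n of the form F_t(h) = Q(h) + Σᵢ c_{t,i} hᵢ + χ_{h ≥ 0}(h), where Q is continuous and strongly convex, c_{t,i} → 0 for i in a set A, and c_{t,i} → ∞ for i ∉ A. Let h_t be a minimizer of F_t, assumed to lie in a fixed compact set. Then h_t converges to the unique minimizer h* of Q over {h ≥ 0 : hᵢ = 0 for all i ∉ A}. -/
/-!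
Compare `h_t` with the oracle solution `h*`: minimality of `h_t` gives
`Q(h_t) + Σᵢ c_{t,i} (h_t)ᵢ ≤ Q(h*) + Σᵢ c_{t,i} h*ᵢ`, and the right-hand penalty vanishes in the
limit because `h*` is supported on `A`, where `c_{t,i} → 0`. Since `Q` is bounded below on the
compact set, the penalties `c_{t,i} (h_t)ᵢ` stay bounded, so `(h_t)ᵢ → 0` for `i ∉ A`, and
`limsup Q(h_t) ≤ Q(h*)`. Hence every cluster point of `(h_t)` is a feasible point of the limiting
problem with value at most `Q(h*)`; strong convexity makes `h*` the only such point, and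
compactness turns this into convergence.
-/

open Filter Topology

section Asymptotics

variable {α : Type*} {l : Filter α}

theorem tendsto_sum_mul_of_forall_notMem {ι : Type*} [Fintype ι] {A : Set ι} {c : α → ι → ℝ}
    {x : ι → ℝ} (hc : ∀ i ∈ A, Tendsto (c · i) l (𝓝 0)) (hx : ∀ i ∉ A, x i = 0) :
    Tendsto (fun t => ∑ i, c t i * x i) l (𝓝 0) := by
  have hterm : ∀ i, Tendsto (fun t => c t i * x i) l (𝓝 0) := fun i => by
    by_cases hi : i ∈ A
    · simpa using (hc i hi).mul_const (x i)
    · simpa [hx i hi] using tendsto_const_nhds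
  simpa using tendsto_finsetSum Finset.univ fun i _ => hterm i

theorem tendsto_apply_nhds_zero_of_sum_mul_le {ι : Type*} [Fintype ι] {c x : α → ι → ℝ}
    {b : α → ℝ} {B : ℝ} (hc : ∀ t i, 0 ≤ c t i) (hx : ∀ t i, 0 ≤ x t i) (hb : Tendsto b l (𝓝 B))
    (hsum : ∀ t, ∑ i, c t i * x t i ≤ b t) {i : ι} (hci : Tendsto (c · i) l atTop) :
    Tendsto (x · i) l (𝓝 0) := by
  refine squeeze_zero' (.of_forall (hx · i)) ?_ (hb.div_atTop hci)
  filter_upwards [hci.eventually_gt_atTop 0] with t hct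
  rw [le_div_iff₀ hct, mul_comm]
  exact (Finset.single_le_sum (fun j _ => mul_nonneg (hc t j) (hx t j)) (Finset.mem_univ i)).trans
    (hsum t)

theorem MapClusterPt.le_of_eventually_le_of_tendsto {X : Type*} [TopologicalSpace X]
    {u : α → X} {y : X} {f : X → ℝ} {g : α → ℝ} {q : ℝ} (hy : MapClusterPt y l u)
    (hf : Continuous f) (hg : Tendsto g l (𝓝 q)) (hfg : ∀ᶠ t in l, f (u t) ≤ g t) : f y ≤ q :=
  le_of_forall_pos_le_add fun δ hδ =>
    (isClosed_le hf continuous_const).mem_of_mapClusterPt hy <| by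
      filter_upwards [hfg, hg.eventually_le_const (lt_add_of_pos_right q hδ)]
        with t h₁ h₂ using h₁.trans h₂

end Asymptotics

theorem convex_setOf_nonneg_and_eq_zero {ι : Type*} (A : Set ι) :
    Convex ℝ {h : EuclideanSpace ℝ ι | (∀ i, 0 ≤ h i) ∧ ∀ i ∉ A, h i = 0} := by
  rintro x ⟨hx₀, hxA⟩ y ⟨hy₀, hyA⟩ a b ha hb -
  refine ⟨fun i => ?_, fun i hi => ?_⟩
  · simpa using add_nonneg (mul_nonneg ha (hx₀ i)) (mul_nonneg hb (hy₀ i))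
  · simp [hxA i hi, hyA i hi]

/-- Convergence of penalized minimizers to the oracle solution: if
`F_t(h) = Q(h) + Σᵢ c_{t,i} hᵢ` on the nonnegative orthant with `Q` continuous
and strongly convex, `c_{t,i} → 0` on `A` and `c_{t,i} → ∞` off `A`, and the
minimizers `h_t` stay in a compact set, then `h_t` converges to the unique
minimizer of `Q` over `{h ≥ 0 : hᵢ = 0 for i ∉ A}`. -/
theorem stmt_8 {n : ℕ} (Q : EuclideanSpace ℝ (Fin n) → ℝ)
    (μ : ℝ) (hμ : 0 < μ)
    (hQstrong : ConvexOn ℝ Set.univ (fun h => Q h - μ / 2 * ‖h‖ ^ 2))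
    (hQcont : Continuous Q)
    (A : Set (Fin n)) (c : ℕ → Fin n → ℝ) (hc_nonneg : ∀ t i, 0 ≤ c t i)
    (hcA : ∀ i ∈ A, Tendsto (fun t => c t i) atTop (nhds 0))
    (hcAc : ∀ i ∉ A, Tendsto (fun t => c t i) atTop atTop)
    (hseq : ℕ → EuclideanSpace ℝ (Fin n))
    (hseq_nonneg : ∀ t i, 0 ≤ hseq t i)
    (hseq_min : ∀ t, IsMinOn (fun h : EuclideanSpace ℝ (Fin n) => Q h + ∑ i, c t i * h i)
      {h : EuclideanSpace ℝ (Fin n) | ∀ i, 0 ≤ h i} (hseq t))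
    (K : Set (EuclideanSpace ℝ (Fin n))) (hK : IsCompact K) (hseqK : ∀ t, hseq t ∈ K)
    (hstar : EuclideanSpace ℝ (Fin n))
    (hstar_mem : hstar ∈ {h : EuclideanSpace ℝ (Fin n) | (∀ i, 0 ≤ h i) ∧ ∀ i ∉ A, h i = 0})
    (hstar_min : IsMinOn Q
      {h : EuclideanSpace ℝ (Fin n) | (∀ i, 0 ≤ h i) ∧ ∀ i ∉ A, h i = 0} hstar) :
    Tendsto hseq atTop (nhds hstar) := by
  obtain ⟨hstar_nonneg, hstar_zero⟩ := hstar_mem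
  obtain ⟨m, hm⟩ := hK.bddBelow_image hQcont.continuousOn
  have hpen := tendsto_sum_mul_of_forall_notMem hcA hstar_zero
  have hval t : Q (hseq t) + ∑ i, c t i * hseq t i ≤ Q hstar + ∑ i, c t i * hstar i :=
    hseq_min t hstar_nonneg
  have hpen_nonneg t : 0 ≤ ∑ i, c t i * hseq t i :=
    Finset.sum_nonneg fun i _ => mul_nonneg (hc_nonneg t i) (hseq_nonneg t i)
  have hoff : ∀ i ∉ A, Tendsto (hseq · i) atTop (𝓝 0) := fun i hi =>
    tendsto_apply_nhds_zero_of_sum_mul_le (x := fun t i => hseq t i) hc_nonneg hseq_nonneg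
      (((tendsto_const_nhds (x := Q hstar)).add hpen).sub_const m)
      (fun t => by linarith [hval t, hm ⟨hseq t, hseqK t, rfl⟩]) (hcAc i hi)
  have hQ_strict := ((strongConvexOn_iff_convex.2 hQstrong).strictConvexOn hμ).subset
    (Set.subset_univ _) (convex_setOf_nonneg_and_eq_zero A)
  refine hK.tendsto_nhds_of_unique_mapClusterPt (.of_forall hseqK) fun y _ hy => ?_
  have hcoord i : Continuous fun x : EuclideanSpace ℝ (Fin n) => x i := by fun_prop
  have hy_nonneg i : 0 ≤ y i :=
    (isClosed_le continuous_const (hcoord i)).mem_of_mapClusterPt hy (.of_forall (hseq_nonneg · i))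
  have hy_zero i (hi : i ∉ A) : y i = 0 := le_antisymm
    (hy.le_of_eventually_le_of_tendsto (hcoord i) (hoff i hi) (.of_forall fun _ => le_rfl))
    (hy_nonneg i)
  have hyQ : Q y ≤ Q hstar := by
    simpa using hy.le_of_eventually_le_of_tendsto hQcont (tendsto_const_nhds.add hpen)
      (.of_forall fun t => by linarith [hval t, hpen_nonneg t])
  exact hQ_strict.eq_of_isMinOn (fun z hz => hyQ.trans (hstar_min hz)) hstar_min
    ⟨hy_nonneg, hy_zero⟩ ⟨hstar_nonneg, hstar_zero⟩
end
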